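/- Suppose s₁, s₂, s₃, s₄ : [0,1] → ℝ are continuous on [0,1] and differentiable on (0,1), satisfy the parallelogram and right-angle conditions p₁(t) + p₃(t) = p₂(t) + p₄(t) and ⟨p₂(t) − p₁(t), p₄(t) − p₁(t)⟩ = 0 for all t ∈ [0,1], and trace rectangles gracing γ on the open interval (0,1). Suppose moreover that t ↦ Y(t) X′(t) − X(t) Y′(t) is integrable on [0,1]. Then A(1) − A(0) = ∫₀¹ (Y(t) X′(t) − X(t) Y′(t)) dt. -/

import Mathlib

/-!
Write the rectangle as `p₁, p₁ + a, p₁ + a + b, p₁ + b`. By the fundamental theorem of calculus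
the area between the arc of `γ` from `γ σ` to `γ τ` and its chord has derivative
`½ det(γ τ - γ σ, (γ ∘ σ)' + (γ ∘ τ)')`, and in the alternating sum `A` these terms collapse to
`det(a', b) - det(a, b')`. As `b ⊥ a` with positive orientation, `b` is `a` turned by a quarter
turn and scaled by `Y / X`, whence `det(a', b) = Y ⟪a, a'⟫ / X = Y X'` and likewise
`det(a, b') = X Y'`. The fundamental theorem of calculus on `[0, 1]` concludes.
-/

noncomputable section

/-- The planar cross product `det(u,v) = u₁v₂ − u₂v₁`. -/
def pdet (u v : EuclideanSpace ℝ (Fin 2)) : ℝ := u 0 * v 1 - u 1 * v 0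

open Set Filter Topology intervalIntegral
open scoped RealInnerProductSpace

local notation "ℝ²" => EuclideanSpace ℝ (Fin 2)

theorem Function.Periodic.deriv {𝕜 F : Type*} [NontriviallyNormedField 𝕜]
    [NormedAddCommGroup F] [NormedSpace 𝕜 F] {f : 𝕜 → F} {c : 𝕜}
    (h : Function.Periodic f c) : Function.Periodic (deriv f) c := fun x => by
  rw [← deriv_comp_add_const, show (fun y => f (y + c)) = f from funext h]

theorem continuous_pdet : Continuous fun p : ℝ² × ℝ² => pdet p.1 p.2 := by
  unfold pdet; fun_prop

theorem HasDerivAt.pdet {u v : ℝ → ℝ²} {u' v' : ℝ²} {t : ℝ}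
    (hu : HasDerivAt u u' t) (hv : HasDerivAt v v' t) :
    HasDerivAt (fun t => pdet (u t) (v t)) (pdet u' (v t) + pdet (u t) v') t := by
  have hu_i (i : Fin 2) : HasDerivAt (fun t => u t i) (u' i) t :=
    (EuclideanSpace.proj (𝕜 := ℝ) i).hasFDerivAt.comp_hasDerivAt t hu
  have hv_i (i : Fin 2) : HasDerivAt (fun t => v t i) (v' i) t :=
    (EuclideanSpace.proj (𝕜 := ℝ) i).hasFDerivAt.comp_hasDerivAt t hv
  refine (((hu_i 0).mul (hv_i 1)).sub ((hu_i 1).mul (hv_i 0))).congr_deriv ?_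
  simp only [_root_.pdet]
  ring

theorem hasDerivAt_integral_of_continuous {E : Type*} [NormedAddCommGroup E] [NormedSpace ℝ E]
    [CompleteSpace E] {f : ℝ → E} (hf : Continuous f) {σ τ : ℝ → ℝ} {σ' τ' t : ℝ}
    (hσ : HasDerivAt σ σ' t) (hτ : HasDerivAt τ τ' t) :
    HasDerivAt (fun u => ∫ x in σ u..τ u, f x) (τ' • f (τ t) - σ' • f (σ t)) t := by
  have hF (x : ℝ) := (hf.integral_hasStrictDerivAt 0 x).hasDerivAt
  convert ((hF (τ t)).scomp t hτ).sub ((hF (σ t)).scomp t hσ) using 1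
  funext u
  exact (integral_interval_sub_left (hf.intervalIntegrable _ _) (hf.intervalIntegrable _ _)).symm

theorem HasDerivAt.norm {F : Type*} [NormedAddCommGroup F] [InnerProductSpace ℝ F]
    {f : ℝ → F} {f' : F} {t : ℝ} (hf : HasDerivAt f f' t) (h0 : f t ≠ 0) :
    HasDerivAt (fun u => ‖f u‖) (⟪f t, f'⟫ / ‖f t‖) t := by
  have h := hf.norm_sq.sqrt (by positivity)
  simp only [Real.sqrt_sq (norm_nonneg _)] at h
  convert h using 1
  field_simp

def arcChordArea (γ : ℝ → ℝ²) (a b : ℝ) : ℝ :=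
  (1/2) * (∫ s in a..b, pdet (γ s) (deriv γ s)) + (1/2) * pdet (γ b) (γ a)

section ArcChordArea

variable {γ : ℝ → ℝ²}

theorem continuous_pdet_deriv (hγ : ContDiff ℝ 1 γ) :
    Continuous fun s => pdet (γ s) (deriv γ s) :=
  continuous_pdet.comp (hγ.continuous.prodMk (hγ.continuous_deriv le_rfl))

theorem continuous_arcChordArea (hγ : ContDiff ℝ 1 γ) :
    Continuous fun p : ℝ × ℝ => arcChordArea γ p.1 p.2 := by
  have hf := continuous_pdet_deriv hγ
  have hF : Continuous fun b => ∫ s in (0:ℝ)..b, pdet (γ s) (deriv γ s) :=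
    continuous_primitive hf.intervalIntegrable 0
  have hint : Continuous fun p : ℝ × ℝ => ∫ s in p.1..p.2, pdet (γ s) (deriv γ s) := by
    refine ((hF.comp continuous_snd).sub (hF.comp continuous_fst)).congr fun p => ?_
    exact integral_interval_sub_left (hf.intervalIntegrable _ _) (hf.intervalIntegrable _ _)
  have hγc := hγ.continuous
  exact (continuous_const.mul hint).add <| continuous_const.mul <|
    continuous_pdet.comp ((hγc.comp continuous_snd).prodMk (hγc.comp continuous_fst))

theorem hasDerivAt_arcChordArea (hγ : ContDiff ℝ 1 γ) {σ τ : ℝ → ℝ} {σ' τ' t : ℝ}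
    (hσ : HasDerivAt σ σ' t) (hτ : HasDerivAt τ τ' t) :
    HasDerivAt (fun u => arcChordArea γ (σ u) (τ u))
      ((1/2) * pdet (γ (τ t) - γ (σ t)) (σ' • deriv γ (σ t) + τ' • deriv γ (τ t))) t := by
  have hγd (x : ℝ) : HasDerivAt γ (deriv γ x) x :=
    ((hγ.differentiable one_ne_zero) x).hasDerivAt
  have hint := hasDerivAt_integral_of_continuous (continuous_pdet_deriv hγ) hσ hτ
  have hchord := ((hγd (τ t)).scomp t hτ).pdet ((hγd (σ t)).scomp t hσ)
  refine ((hint.const_mul (1/2)).add (hchord.const_mul (1/2))).congr_deriv ?_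
  simp only [pdet, Function.comp_apply, PiLp.sub_apply, PiLp.add_apply, PiLp.smul_apply,
    smul_eq_mul]
  ring

end ArcChordArea

theorem pdet_alternating_sum {p₁ p₂ p₃ p₄ v₁ v₂ v₃ v₄ : ℝ²} (hp : p₁ + p₃ = p₂ + p₄)
    (hv : v₁ + v₃ = v₂ + v₄) :
    (1/2) * pdet (p₂ - p₁) (v₁ + v₂) + (1/2) * pdet (p₄ - p₃) (v₃ + v₄)
      - ((1/2) * pdet (p₃ - p₂) (v₂ + v₃) + (1/2) * pdet (p₁ - p₄) (v₄ + v₁))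
      = pdet (v₂ - v₁) (p₃ - p₂) - pdet (p₂ - p₁) (v₃ - v₂) := by
  obtain rfl : p₄ = p₁ + p₃ - p₂ := eq_sub_of_add_eq' hp.symm
  obtain rfl : v₄ = v₁ + v₃ - v₂ := eq_sub_of_add_eq' hv.symm
  simp only [pdet, PiLp.sub_apply, PiLp.add_apply]
  ring

theorem pdet_sub_pdet_of_inner_eq_zero {a b : ℝ²} (hab : ⟪a, b⟫ = 0) (hpos : 0 < pdet a b)
    (a' b' : ℝ²) :
    pdet a' b - pdet a b' = ‖b‖ * (⟪a, a'⟫ / ‖a‖) - ‖a‖ * (⟪b, b'⟫ / ‖b‖) := by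
  have ha : 0 < ‖a‖ := norm_pos_iff.2 fun h => by simp [h, pdet] at hpos
  have hb : 0 < ‖b‖ := norm_pos_iff.2 fun h => by simp [h, pdet] at hpos
  have hXY : pdet a b = ‖a‖ * ‖b‖ := by
    have hlagrange : pdet a b ^ 2 + ⟪a, b⟫ ^ 2 = ‖a‖ ^ 2 * ‖b‖ ^ 2 := by
      simp only [pdet, EuclideanSpace.real_norm_sq_eq, PiLp.inner_apply, RCLike.inner_apply,
        conj_trivial, Fin.sum_univ_two]
      ring
    rw [hab] at hlagrange
    nlinarith [mul_pos ha hb]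
  -- `‖a‖ • b` is `‖b‖ • a` turned by a quarter turn
  have hrot : (‖a‖ * b 0 + ‖b‖ * a 1) ^ 2 + (‖a‖ * b 1 - ‖b‖ * a 0) ^ 2 = 0 := by
    have h2 := EuclideanSpace.real_norm_sq_eq a
    have h3 := EuclideanSpace.real_norm_sq_eq b
    simp only [pdet, Fin.sum_univ_two] at hXY h2 h3
    linear_combination (-‖a‖ ^ 2) * h3 - ‖b‖ ^ 2 * h2 - 2 * ‖a‖ * ‖b‖ * hXY
  obtain ⟨hrot₀, hrot₁⟩ := (add_eq_zero_iff_of_nonneg (sq_nonneg _) (sq_nonneg _)).1 hrot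
  rw [sq_eq_zero_iff] at hrot₀ hrot₁
  field_simp
  simp only [pdet, PiLp.inner_apply, RCLike.inner_apply, conj_trivial, Fin.sum_univ_two]
  linear_combination (‖b‖ * a' 0 + ‖a‖ * b' 1) * hrot₁ + (‖a‖ * b' 0 - ‖b‖ * a' 1) * hrot₀

theorem hasDerivAt_alternatingArcChordArea {γ : ℝ → ℝ²} (hγ : ContDiff ℝ 1 γ)
    (hper : Function.Periodic γ 1) {s₁ s₂ s₃ s₄ : ℝ → ℝ} {t : ℝ} (hd₁ : DifferentiableAt ℝ s₁ t)
    (hd₂ : DifferentiableAt ℝ s₂ t) (hd₃ : DifferentiableAt ℝ s₃ t) (hd₄ : DifferentiableAt ℝ s₄ t)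
    (hpar : ∀ᶠ u in 𝓝 t, γ (s₁ u) + γ (s₃ u) = γ (s₂ u) + γ (s₄ u))
    (hperp : ⟪γ (s₂ t) - γ (s₁ t), γ (s₄ t) - γ (s₁ t)⟫ = 0)
    (hccw : 0 < pdet (γ (s₂ t) - γ (s₁ t)) (γ (s₄ t) - γ (s₁ t))) :
    HasDerivAt (fun u => (arcChordArea γ (s₁ u) (s₂ u) + arcChordArea γ (s₃ u) (s₄ u))
        - (arcChordArea γ (s₂ u) (s₃ u) + arcChordArea γ (s₄ u) (s₁ u + 1)))
      (‖γ (s₃ t) - γ (s₂ t)‖ * deriv (fun u => ‖γ (s₂ u) - γ (s₁ u)‖) t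
        - ‖γ (s₂ t) - γ (s₁ t)‖ * deriv (fun u => ‖γ (s₃ u) - γ (s₂ u)‖) t) t := by
  have hγd (x : ℝ) : HasDerivAt γ (deriv γ x) x :=
    ((hγ.differentiable one_ne_zero) x).hasDerivAt
  have hp {s : ℝ → ℝ} (hs : DifferentiableAt ℝ s t) :
      HasDerivAt (fun u => γ (s u)) (deriv s t • deriv γ (s t)) t :=
    (hγd (s t)).scomp t hs.hasDerivAt
  have hvel : deriv s₁ t • deriv γ (s₁ t) + deriv s₃ t • deriv γ (s₃ t)
      = deriv s₂ t • deriv γ (s₂ t) + deriv s₄ t • deriv γ (s₄ t) :=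
    ((hp hd₁).add (hp hd₃)).unique (((hp hd₂).add (hp hd₄)).congr_of_eventuallyEq hpar)
  have hside : γ (s₄ t) - γ (s₁ t) = γ (s₃ t) - γ (s₂ t) := by
    linear_combination (norm := module) -hpar.self_of_nhds
  rw [hside] at hperp hccw
  have ha : γ (s₂ t) - γ (s₁ t) ≠ 0 := fun h => by simp [h, pdet] at hccw
  have hb : γ (s₃ t) - γ (s₂ t) ≠ 0 := fun h => by simp [h, pdet] at hccw
  rw [((hp hd₂).fun_sub (hp hd₁)).norm ha |>.deriv, ((hp hd₃).fun_sub (hp hd₂)).norm hb |>.deriv,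
    ← pdet_sub_pdet_of_inner_eq_zero hperp hccw, ← pdet_alternating_sum hpar.self_of_nhds hvel]
  have h₄₁ := hasDerivAt_arcChordArea hγ hd₄.hasDerivAt (hd₁.hasDerivAt.add_const 1)
  rw [hper, hper.deriv] at h₄₁
  exact ((hasDerivAt_arcChordArea hγ hd₁.hasDerivAt hd₂.hasDerivAt).add
    (hasDerivAt_arcChordArea hγ hd₃.hasDerivAt hd₄.hasDerivAt)).sub
    ((hasDerivAt_arcChordArea hγ hd₂.hasDerivAt hd₃.hasDerivAt).add h₄₁)

/-- Integral version: if `s₁,…,s₄` are continuous on `[0,1]`, differentiable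
on `(0,1)`, satisfy the parallelogram and right-angle conditions on `[0,1]`
and trace rectangles gracing `γ` on `(0,1)`, and `Y X′ − X Y′` is integrable
on `[0,1]`, then `A(1) − A(0) = ∫₀¹ (Y X′ − X Y′)`. -/
theorem stmt5
    (γ : ℝ → EuclideanSpace ℝ (Fin 2)) (hγ : ContDiff ℝ 1 γ)
    (hper : ∀ s : ℝ, γ (s + 1) = γ s)
    (s₁ s₂ s₃ s₄ : ℝ → ℝ)
    (hc₁ : ContinuousOn s₁ (Set.Icc (0:ℝ) 1)) (hc₂ : ContinuousOn s₂ (Set.Icc (0:ℝ) 1))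
    (hc₃ : ContinuousOn s₃ (Set.Icc (0:ℝ) 1)) (hc₄ : ContinuousOn s₄ (Set.Icc (0:ℝ) 1))
    (hd₁ : ∀ t ∈ Set.Ioo (0:ℝ) 1, DifferentiableAt ℝ s₁ t)
    (hd₂ : ∀ t ∈ Set.Ioo (0:ℝ) 1, DifferentiableAt ℝ s₂ t)
    (hd₃ : ∀ t ∈ Set.Ioo (0:ℝ) 1, DifferentiableAt ℝ s₃ t)
    (hd₄ : ∀ t ∈ Set.Ioo (0:ℝ) 1, DifferentiableAt ℝ s₄ t)
    (hpar : ∀ t ∈ Set.Icc (0:ℝ) 1, γ (s₁ t) + γ (s₃ t) = γ (s₂ t) + γ (s₄ t))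
    (hperp : ∀ t ∈ Set.Icc (0:ℝ) 1, inner ℝ (γ (s₂ t) - γ (s₁ t)) (γ (s₄ t) - γ (s₁ t)) = (0 : ℝ))
    (hccw : ∀ t ∈ Set.Ioo (0:ℝ) 1, pdet (γ (s₂ t) - γ (s₁ t)) (γ (s₄ t) - γ (s₁ t)) > 0)
    (X Y : ℝ → ℝ)
    (hX : X = fun t => ‖γ (s₂ t) - γ (s₁ t)‖)
    (hY : Y = fun t => ‖γ (s₃ t) - γ (s₂ t)‖)
    (hint : IntervalIntegrable (fun t => Y t * deriv X t - X t * deriv Y t)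
      MeasureTheory.volume 0 1)
    (A₁ A₂ A₃ A₄ : ℝ → ℝ)
    (hA₁ : A₁ = fun t => (1/2) * (∫ s in (s₁ t)..(s₂ t), pdet (γ s) (deriv γ s))
        + (1/2) * pdet (γ (s₂ t)) (γ (s₁ t)))
    (hA₂ : A₂ = fun t => (1/2) * (∫ s in (s₂ t)..(s₃ t), pdet (γ s) (deriv γ s))
        + (1/2) * pdet (γ (s₃ t)) (γ (s₂ t)))
    (hA₃ : A₃ = fun t => (1/2) * (∫ s in (s₃ t)..(s₄ t), pdet (γ s) (deriv γ s))
        + (1/2) * pdet (γ (s₄ t)) (γ (s₃ t)))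
    (hA₄ : A₄ = fun t => (1/2) * (∫ s in (s₄ t)..(s₁ t + 1), pdet (γ s) (deriv γ s))
        + (1/2) * pdet (γ (s₁ t + 1)) (γ (s₄ t)))
    (A : ℝ → ℝ) (hA : A = fun t => (A₁ t + A₃ t) - (A₂ t + A₄ t))
:
    A 1 - A 0 = ∫ t in (0:ℝ)..1, (Y t * deriv X t - X t * deriv Y t) := by
  have hA' : A = fun u => (arcChordArea γ (s₁ u) (s₂ u) + arcChordArea γ (s₃ u) (s₄ u))
      - (arcChordArea γ (s₂ u) (s₃ u) + arcChordArea γ (s₄ u) (s₁ u + 1)) := by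
    subst hA hA₁ hA₂ hA₃ hA₄; rfl
  have hcont : ContinuousOn A (Icc 0 1) := by
    have harc (σ τ : ℝ → ℝ) (hσ : ContinuousOn σ (Icc 0 1)) (hτ : ContinuousOn τ (Icc 0 1)) :=
      (continuous_arcChordArea hγ).comp_continuousOn (hσ.prodMk hτ)
    rw [hA']
    exact ((harc _ _ hc₁ hc₂).add (harc _ _ hc₃ hc₄)).sub
      ((harc _ _ hc₂ hc₃).add (harc _ _ hc₄ (hc₁.add continuousOn_const)))
  have hderiv (t : ℝ) (ht : t ∈ Ioo 0 1) :
      HasDerivAt A (Y t * deriv X t - X t * deriv Y t) t := by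
    have hpar_near : ∀ᶠ u in 𝓝 t, γ (s₁ u) + γ (s₃ u) = γ (s₂ u) + γ (s₄ u) :=
      eventually_of_mem (isOpen_Ioo.mem_nhds ht) fun u hu => hpar u (Ioo_subset_Icc_self hu)
    subst hX hY
    rw [hA']
    exact hasDerivAt_alternatingArcChordArea hγ hper (hd₁ t ht) (hd₂ t ht) (hd₃ t ht) (hd₄ t ht)
      hpar_near (hperp t (Ioo_subset_Icc_self ht)) (hccw t ht)
  rw [integral_eq_sub_of_hasDerivAt_of_le zero_le_one hcont hderiv hint]
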